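/- arXiv:1807.02363 — 5 statements merged into one kernel-verified Lean document; each statement's English description precedes it below -/
import Mathlib

section
/- Let k ≥ 1 and n ≥ 0 be integers. With γ_{λ,n} := 2^{2−2λ} Γ(n+2λ)/(Γ(λ) Γ(n+λ+1)) and β_{λ,n,μ} := (1−λ)_μ (n+1)_μ/(μ! (n+λ+1)_μ), the following identities hold: (a) ((n+2k+1)/(4k)) γ_{k,n+1} = γ_{k+1,n}; (b) for every integer 1 ≤ μ ≤ k, ((n+2k+1)/(4k)) γ_{k,n+1} (β_{k,n+1,μ−1} + β_{k,n+1,μ}) − ((n+2)/(2k)) γ_{k,n+2} β_{k,n+2,μ−1} = γ_{k+1,n} β_{k+1,n,μ} (note that β_{k,n+1,k} = 0 automatically since the factor (1−k)_k vanishes). -/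
/-!
Every coefficient in (a) and (b) is a rational multiple of `γ_{k,n+1}` or of
`β_{k,n+1,μ-1}`, because `Γ(s+1) = s Γ(s)` and `(x)_{m+1} = (x)_m (x+m) = x (x+1)_m`.
After these substitutions (a) is immediate, and (b), written with `μ = m + 1`, reduces to
the polynomial identity `(m+1)(n+k+m+2) + (m-k+1)(n+m+2) - 2(m+1)(n+m+2) = -k(n+1)`.
-/

open Real

/-- Rising factorial `(x)_m = x (x+1) ⋯ (x+m-1)`. -/
noncomputable def risingFactorial (x : ℝ) (m : ℕ) : ℝ :=
  ∏ i ∈ Finset.range m, (x + i)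

/-- `β_{λ,n,μ} = (1-λ)_μ (n+1)_μ / (μ! (n+λ+1)_μ)`. -/
noncomputable def betaCoef (lam : ℝ) (n : ℕ) (μ : ℕ) : ℝ :=
  risingFactorial (1 - lam) μ * risingFactorial ((n : ℝ) + 1) μ /
    ((μ.factorial : ℝ) * risingFactorial ((n : ℝ) + lam + 1) μ)

/-- `γ_{λ,n} = 2^(2-2λ) Γ(n+2λ) / (Γ(λ) Γ(n+λ+1))`. -/
noncomputable def gammaCoef (lam : ℝ) (n : ℕ) : ℝ :=
  (2 : ℝ) ^ (2 - 2 * lam) * Real.Gamma ((n : ℝ) + 2 * lam) /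
    (Real.Gamma lam * Real.Gamma ((n : ℝ) + lam + 1))

lemma risingFactorial_succ (x : ℝ) (m : ℕ) :
    risingFactorial x (m + 1) = risingFactorial x m * (x + m) :=
  Finset.prod_range_succ _ m

lemma risingFactorial_succ' (x : ℝ) (m : ℕ) :
    risingFactorial x (m + 1) = x * risingFactorial (x + 1) m := by
  simp only [risingFactorial, Finset.prod_range_succ', Nat.cast_add, Nat.cast_one,
    Nat.cast_zero, add_zero, add_assoc, add_comm (1 : ℝ), mul_comm x]

lemma risingFactorial_add_one (x : ℝ) (hx : x ≠ 0) (m : ℕ) :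
    risingFactorial (x + 1) m = risingFactorial x m * (x + m) / x := by
  rw [eq_div_iff hx, ← risingFactorial_succ, risingFactorial_succ', mul_comm]

lemma risingFactorial_pos {x : ℝ} (hx : 0 < x) (m : ℕ) : 0 < risingFactorial x m :=
  Finset.prod_pos fun _ _ => by positivity

lemma betaCoef_succ_right (lam : ℝ) (n μ : ℕ) :
    betaCoef lam n (μ + 1) = betaCoef lam n μ *
      ((1 - lam + μ) * (n + 1 + μ) / ((μ + 1) * (n + lam + 1 + μ))) := by
  simp only [betaCoef, risingFactorial_succ, Nat.factorial_succ, Nat.cast_mul, Nat.cast_succ]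
  -- `ring` only inverts monomials, so numerators and denominators are compared separately.
  rw [div_mul_div_comm]
  congr 1 <;> ring

lemma betaCoef_succ_left (lam : ℝ) (n μ : ℕ) (h : 0 < (n : ℝ) + lam + 1) :
    betaCoef lam (n + 1) μ = betaCoef lam n μ *
      ((n + 1 + μ) * (n + lam + 1) / ((n + 1) * (n + lam + 1 + μ))) := by
  have := risingFactorial_pos h μ
  simp only [betaCoef, Nat.cast_succ, add_right_comm _ (1 : ℝ) lam]
  rw [risingFactorial_add_one _ h.ne', risingFactorial_add_one _ (by positivity)]
  field_simp

lemma betaCoef_add_one_succ (lam : ℝ) (n μ : ℕ) :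
    betaCoef (lam + 1) n (μ + 1) = betaCoef lam (n + 1) μ *
      (-lam * (n + 1) / ((μ + 1) * (n + lam + 2 + μ))) := by
  rw [betaCoef, betaCoef, risingFactorial_succ' (1 - (lam + 1)), risingFactorial_succ' (n + 1),
    risingFactorial_succ, Nat.factorial_succ]
  simp only [Nat.cast_mul, Nat.cast_succ, show 1 - (lam + 1) + 1 = 1 - lam by ring,
    show (n : ℝ) + (lam + 1) + 1 = n + 1 + lam + 1 by ring]
  rw [div_mul_div_comm]
  congr 1 <;> ring

lemma gammaCoef_succ (lam : ℝ) (n : ℕ) (h₁ : (n : ℝ) + 2 * lam ≠ 0)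
    (h₂ : (n : ℝ) + lam + 1 ≠ 0) :
    gammaCoef lam (n + 1) = (n + 2 * lam) / (n + lam + 1) * gammaCoef lam n := by
  simp only [gammaCoef, Nat.cast_succ, add_right_comm _ (1 : ℝ), Real.Gamma_add_one h₁,
    Real.Gamma_add_one h₂]
  rw [div_mul_div_comm]
  congr 1 <;> ring

lemma gammaCoef_add_one (lam : ℝ) (n : ℕ) (hlam : lam ≠ 0)
    (h : (n : ℝ) + 2 * lam + 1 ≠ 0) :
    gammaCoef (lam + 1) n = (n + 2 * lam + 1) / (4 * lam) * gammaCoef lam (n + 1) := by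
  have hpow : (2 : ℝ) ^ (2 - 2 * lam) = 4 * 2 ^ (2 - 2 * (lam + 1)) := by
    rw [show 2 - 2 * lam = 2 + (2 - 2 * (lam + 1)) by ring, Real.rpow_add two_pos]
    norm_num
  simp only [gammaCoef, hpow, Nat.cast_succ, Real.Gamma_add_one hlam,
    show (n : ℝ) + 2 * (lam + 1) = n + 2 * lam + 1 + 1 by ring, Real.Gamma_add_one h,
    show (n : ℝ) + 1 + 2 * lam = n + 2 * lam + 1 by ring,
    show (n : ℝ) + (lam + 1) + 1 = n + 1 + lam + 1 by ring]
  field_simp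

/-- coefficient identities in the inductive step of the expansion
of `(sin θ)^{2λ-1} C_n^λ(cos θ)` for integer `λ = k`:
(a) `((n+2k+1)/(4k)) γ_{k,n+1} = γ_{k+1,n}`;
(b) for `1 ≤ μ ≤ k`,
`((n+2k+1)/(4k)) γ_{k,n+1} (β_{k,n+1,μ-1} + β_{k,n+1,μ})
  - ((n+2)/(2k)) γ_{k,n+2} β_{k,n+2,μ-1} = γ_{k+1,n} β_{k+1,n,μ}`. -/
theorem gamma_beta_recurrence (k n : ℕ) (hk : 1 ≤ k) :
    (((n : ℝ) + 2 * k + 1) / (4 * k)) * gammaCoef (k : ℝ) (n + 1)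
      = gammaCoef ((k : ℝ) + 1) n
    ∧ ∀ μ : ℕ, 1 ≤ μ → μ ≤ k →
      (((n : ℝ) + 2 * k + 1) / (4 * k)) * gammaCoef (k : ℝ) (n + 1) *
          (betaCoef (k : ℝ) (n + 1) (μ - 1) + betaCoef (k : ℝ) (n + 1) μ)
        - (((n : ℝ) + 2) / (2 * k)) * gammaCoef (k : ℝ) (n + 2) *
            betaCoef (k : ℝ) (n + 2) (μ - 1)
      = gammaCoef ((k : ℝ) + 1) n * betaCoef ((k : ℝ) + 1) n μ := by
  have hk0 : (0 : ℝ) < k := by exact_mod_cast hk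
  have hγ : gammaCoef ((k : ℝ) + 1) n = (n + 2 * k + 1) / (4 * k) * gammaCoef k (n + 1) :=
    gammaCoef_add_one k n hk0.ne' (by positivity)
  refine ⟨hγ.symm, fun μ hμ _ => ?_⟩
  obtain ⟨m, rfl⟩ : ∃ m, μ = m + 1 := ⟨μ - 1, by omega⟩
  rw [Nat.add_sub_cancel, hγ, betaCoef_succ_right k (n + 1) m, betaCoef_add_one_succ k n m,
    show n + 2 = n + 1 + 1 from rfl, gammaCoef_succ k (n + 1) (by positivity) (by positivity),
    betaCoef_succ_left k (n + 1) m (by positivity)]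
  push_cast
  field_simp
  ring
end

section
/- Let d > 1 be an integer, c ∈ (0, π/2], and β ∈ ℝ. Define ψ_β(θ) := −cos c/(1−cos c) + ((d+1) cos c + 1)β/d + (1/(1−cos c) − (d+1)(1+cos c)β/d) cos θ + β((d+1) cos²θ − 1)/d. Then ψ_β(0) = 1 and ψ_β(c) = 0, and the three coefficients of ψ_β in the expansion into the normalized Gegenbauer polynomials 1, cos θ, ((d+1)cos²θ − 1)/d are all nonnegative if and only if d cos c/((1−cos c)((d+1) cos c + 1)) ≤ β ≤ d/((d+1) sin² c). Moreover, this interval of admissible β is nonempty if and only if c ≥ arccos √(1/(d+1)). -/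
/-!
Write `x = cos c ∈ [0, 1)`. Then `ψ_β` is a quadratic polynomial in `cos θ` whose values at
`cos θ = 1` and `cos θ = x` are identically `1` and `0`. The constant and linear coefficients are
affine in `β`, so their nonnegativity is a lower and an upper bound on `β`; the lower bound is
nonnegative, which makes `β ≥ 0` automatic. Cross-multiplying, the lower bound is at most the upper
one iff `d (1 - x) (1 - (d + 1) x²) ≥ 0`, i.e. iff `x ≤ 1 / √(d + 1)`, and `arccos` is decreasing.
-/

open Real

namespace GegenbauerPsi

/-- `psi n x β (cos θ)` is `ψ_β(θ)` for `n = d` and `x = cos c`. -/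
noncomputable def psi (n x β t : ℝ) : ℝ :=
  -x / (1 - x) + ((n + 1) * x + 1) * β / n
    + (1 / (1 - x) - (n + 1) * (1 + x) * β / n) * t
    + β * ((n + 1) * t ^ 2 - 1) / n

variable {n x β : ℝ}

theorem psi_one (hn : n ≠ 0) (hx : x ≠ 1) : psi n x β 1 = 1 := by
  have : 1 - x ≠ 0 := sub_ne_zero.mpr hx.symm
  unfold psi
  field_simp
  ring

theorem psi_self (hn : n ≠ 0) (hx : x ≠ 1) : psi n x β x = 0 := by
  have : 1 - x ≠ 0 := sub_ne_zero.mpr hx.symm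
  unfold psi
  field_simp
  ring

theorem constCoeff_nonneg_iff (hn : 0 < n) (hx0 : 0 ≤ x) (hx1 : x < 1) :
    0 ≤ -x / (1 - x) + ((n + 1) * x + 1) * β / n
      ↔ n * x / ((1 - x) * ((n + 1) * x + 1)) ≤ β := by
  have hB : 0 < (n + 1) * x + 1 := by positivity
  rw [neg_div, neg_add_eq_sub, sub_nonneg, div_le_div_iff₀ (by linarith) hn,
    div_le_iff₀ (mul_pos (by linarith) hB)]
  constructor <;> intro h <;> linarith

theorem linCoeff_nonneg_iff (hn : 0 < n) (hx0 : -1 < x) (hx1 : x < 1) :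
    0 ≤ 1 / (1 - x) - (n + 1) * (1 + x) * β / n ↔ β ≤ n / ((n + 1) * (1 - x ^ 2)) := by
  have hx2 : 0 < 1 - x ^ 2 := by nlinarith
  rw [sub_nonneg, div_le_div_iff₀ hn (by linarith), le_div_iff₀ (by positivity)]
  constructor <;> intro h <;> linarith

theorem lower_le_upper_iff (hn : 0 < n) (hx0 : 0 ≤ x) (hx1 : x < 1) :
    n * x / ((1 - x) * ((n + 1) * x + 1)) ≤ n / ((n + 1) * (1 - x ^ 2))
      ↔ (n + 1) * x ^ 2 ≤ 1 := by
  have hx2 : 0 < 1 - x ^ 2 := by nlinarith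
  have hfactor : 0 < n * (1 - x) := mul_pos hn (by linarith)
  rw [div_le_div_iff₀ (by positivity) (by positivity), ← sub_nonneg,
    show n * ((1 - x) * ((n + 1) * x + 1)) - n * x * ((n + 1) * (1 - x ^ 2))
      = n * (1 - x) * (1 - (n + 1) * x ^ 2) by ring,
    mul_nonneg_iff_of_pos_left hfactor, sub_nonneg]

end GegenbauerPsi

theorem Real.arccos_le_iff_cos_le {c t : ℝ} (hc : c ∈ Set.Icc 0 π) (ht : t ∈ Set.Icc (-1) 1) :
    arccos t ≤ c ↔ cos c ≤ t := by
  conv_lhs => rw [← arccos_cos hc.1 hc.2]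
  exact strictAntiOn_arccos.le_iff_ge ht ⟨neg_one_le_cos c, cos_le_one c⟩

open GegenbauerPsi

/-- for integer `d > 1`, `c ∈ (0, π/2]` and `β ∈ ℝ`, the function
`ψ_β(θ) = -cos c/(1-cos c) + ((d+1)cos c + 1)β/d
  + (1/(1-cos c) - (d+1)(1+cos c)β/d) cos θ + β((d+1)cos²θ - 1)/d`
satisfies `ψ_β(0) = 1` and `ψ_β(c) = 0`; its three coefficients in the basis
`1, cos θ, ((d+1)cos²θ - 1)/d` are all nonnegative iff
`d cos c/((1-cos c)((d+1)cos c + 1)) ≤ β ≤ d/((d+1) sin² c)`; and this interval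
is nonempty iff `c ≥ arccos √(1/(d+1))`. -/
theorem psi_beta_properties
    (d : ℕ) (hd : 1 < d) (c : ℝ) (hc : c ∈ Set.Ioc 0 (π / 2)) (β : ℝ) :
    (fun θ : ℝ =>
        -Real.cos c / (1 - Real.cos c) + (((d : ℝ) + 1) * Real.cos c + 1) * β / d
        + (1 / (1 - Real.cos c) - ((d : ℝ) + 1) * (1 + Real.cos c) * β / d) * Real.cos θ
        + β * (((d : ℝ) + 1) * (Real.cos θ) ^ 2 - 1) / d) 0 = 1
    ∧ (fun θ : ℝ =>
        -Real.cos c / (1 - Real.cos c) + (((d : ℝ) + 1) * Real.cos c + 1) * β / d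
        + (1 / (1 - Real.cos c) - ((d : ℝ) + 1) * (1 + Real.cos c) * β / d) * Real.cos θ
        + β * (((d : ℝ) + 1) * (Real.cos θ) ^ 2 - 1) / d) c = 0
    ∧ ((0 ≤ -Real.cos c / (1 - Real.cos c) + (((d : ℝ) + 1) * Real.cos c + 1) * β / d
        ∧ 0 ≤ 1 / (1 - Real.cos c) - ((d : ℝ) + 1) * (1 + Real.cos c) * β / d
        ∧ 0 ≤ β)
       ↔ ((d : ℝ) * Real.cos c / ((1 - Real.cos c) * (((d : ℝ) + 1) * Real.cos c + 1)) ≤ β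
          ∧ β ≤ (d : ℝ) / (((d : ℝ) + 1) * (Real.sin c) ^ 2)))
    ∧ ((d : ℝ) * Real.cos c / ((1 - Real.cos c) * (((d : ℝ) + 1) * Real.cos c + 1))
          ≤ (d : ℝ) / (((d : ℝ) + 1) * (Real.sin c) ^ 2)
       ↔ Real.arccos (Real.sqrt (1 / ((d : ℝ) + 1))) ≤ c) := by
  obtain ⟨hc0, hc2⟩ := hc
  have hn : (0 : ℝ) < d := by exact_mod_cast zero_lt_one.trans hd
  have hx0 : 0 ≤ cos c := cos_nonneg_of_mem_Icc ⟨by linarith [pi_pos], hc2⟩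
  have hx1 : cos c < 1 := by
    simpa using cos_lt_cos_of_nonneg_of_le_pi le_rfl (by linarith [pi_pos]) hc0
  have hlower : 0 ≤ d * cos c / ((1 - cos c) * ((d + 1) * cos c + 1)) :=
    div_nonneg (by positivity) (mul_nonneg (by linarith) (by positivity))
  rw [sin_sq]
  refine ⟨?_, ?_, ?_, ?_⟩
  · show psi d (cos c) β (cos 0) = 1
    rw [cos_zero]
    exact psi_one hn.ne' hx1.ne
  · exact psi_self hn.ne' hx1.ne
  · rw [constCoeff_nonneg_iff hn hx0 hx1, linCoeff_nonneg_iff hn (by linarith) hx1]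
    exact ⟨fun h => ⟨h.1, h.2.1⟩, fun h => ⟨h.1, h.2, hlower.trans h.1⟩⟩
  · rw [lower_le_upper_iff hn hx0 hx1,
      arccos_le_iff_cos_le ⟨hc0.le, by linarith [pi_pos]⟩
        ⟨by linarith [sqrt_nonneg (1 / ((d : ℝ) + 1))], sqrt_le_one.mpr (by bound)⟩,
      le_sqrt hx0 (by positivity), le_div_iff₀ (by positivity), mul_comm]
end

section
/- Let α > 0 and let m ≥ 0 be an even integer. Then ∫₀^π e^{−θ/α} (cos θ)^m sin θ dθ = ((1 + e^{−π/α})/((m+1) 2^m)) · [ 2^m − Σ_{k=0}^{m/2} binom(m+1, (m−2k)/2) / ((2k+1)² α² + 1) ]. -/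
/-!
With `n = m + 1`, differentiating the power-reduction formula
`(2 cos θ)^n = ∑ⱼ binom(n, j) cos((n - 2j) θ)` writes `cos^m θ sin θ` as a combination of the
`sin((n - 2j) θ)`. Every frequency `c = n - 2j` is odd, so
`∫₀^π e^{-aθ} sin(cθ) dθ = c (1 + e^{-aπ}) / (a² + c²)`; for `a = 1/α` the weight
`c² / (a² + c²)` is `1 - 1/(c²α² + 1)`.
The frequencies `c` and `-c` (indices `j` and `n - j`) contribute equally, which halves the sum.
-/

open Real Finset

theorem two_cos_pow_eq_sum (n : ℕ) (x : ℝ) :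
    (2 * cos x) ^ n = ∑ j ∈ range (n + 1), (n.choose j : ℝ) * cos ((n - 2 * j : ℝ) * x) := by
  have hexp : (((2 * cos x) ^ n : ℝ) : ℂ) = ∑ j ∈ range (n + 1),
      ((n.choose j : ℝ) : ℂ) * Complex.exp (((n - 2 * j : ℝ) * x : ℝ) * Complex.I) := by
    push_cast
    rw [Complex.two_cos, add_comm, add_pow]
    refine sum_congr rfl fun j hj => ?_
    rw [← Complex.exp_nat_mul, ← Complex.exp_nat_mul, ← Complex.exp_add, mul_comm]
    push_cast [Nat.cast_sub (Nat.lt_succ_iff.mp (mem_range.mp hj))]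
    ring_nf
  simpa only [Complex.ofReal_re, Complex.re_sum, Complex.re_ofReal_mul,
    Complex.exp_ofReal_mul_I_re] using congrArg Complex.re hexp

theorem two_cos_pow_mul_two_sin_eq_sum (n : ℕ) (x : ℝ) :
    (n + 1) * (2 * cos x) ^ n * (2 * sin x) = ∑ j ∈ range (n + 2),
      ((n + 1).choose j : ℝ) * ((n + 1 - 2 * j : ℝ) * sin ((n + 1 - 2 * j : ℝ) * x)) := by
  have hpow : HasDerivAt (fun y => (2 * cos y) ^ (n + 1))
      ((n + 1 : ℕ) * (2 * cos x) ^ n * (2 * -sin x)) x :=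
    ((hasDerivAt_cos x).const_mul 2).pow (n + 1)
  have hsum : HasDerivAt (fun y => (2 * cos y) ^ (n + 1)) (∑ j ∈ range (n + 2),
      ((n + 1).choose j : ℝ) * (-sin ((n + 1 - 2 * j : ℝ) * x) * ((n + 1 - 2 * j : ℝ) * 1))) x := by
    simp_rw [two_cos_pow_eq_sum (n + 1)]
    push_cast
    exact HasDerivAt.fun_sum fun j _ => (((hasDerivAt_id x).const_mul _).cos).const_mul _
  rw [← neg_inj, ← sum_neg_distrib]
  push_cast at hpow
  convert hpow.unique hsum using 1
  · ring
  · exact sum_congr rfl fun j _ => by ring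

theorem integral_mul_cos_pow_mul_sin {f : ℝ → ℝ} (hf : Continuous f) (n : ℕ) (a b : ℝ) :
    ∫ θ in a..b, f θ * cos θ ^ n * sin θ = (∑ j ∈ range (n + 2), ((n + 1).choose j : ℝ) *
      ((n + 1 - 2 * j : ℝ) * ∫ θ in a..b, f θ * sin ((n + 1 - 2 * j : ℝ) * θ))) /
        ((n + 1) * 2 ^ (n + 1)) := by
  have hpoint (θ : ℝ) : f θ * cos θ ^ n * sin θ = (∑ j ∈ range (n + 2), ((n + 1).choose j : ℝ) *
      ((n + 1 - 2 * j : ℝ) * (f θ * sin ((n + 1 - 2 * j : ℝ) * θ)))) / ((n + 1) * 2 ^ (n + 1)) := by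
    rw [eq_div_iff (by positivity)]
    simp_rw [mul_left_comm _ (f θ), ← mul_sum, ← two_cos_pow_mul_two_sin_eq_sum]
    ring
  simp_rw [hpoint, intervalIntegral.integral_div]
  rw [intervalIntegral.integral_finsetSum fun j _ => by
    apply Continuous.intervalIntegrable; fun_prop]
  simp_rw [intervalIntegral.integral_const_mul]

theorem hasDerivAt_exp_neg_mul_mul_sin_primitive {a c : ℝ} (h : a ^ 2 + c ^ 2 ≠ 0) (x : ℝ) :
    HasDerivAt (fun θ => -(exp (-(a * θ)) * (a * sin (c * θ) + c * cos (c * θ))) / (a ^ 2 + c ^ 2))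
      (exp (-(a * x)) * sin (c * x)) x := by
  have hexp := (((hasDerivAt_id' x).const_mul a).fun_neg).exp
  have hsin := ((hasDerivAt_id' x).const_mul c).sin
  have hcos := ((hasDerivAt_id' x).const_mul c).cos
  refine (((hexp.fun_mul ((hsin.const_mul a).fun_add (hcos.const_mul c))).fun_neg).div_const
    (a ^ 2 + c ^ 2)).congr_deriv ?_
  field_simp
  ring

theorem integral_exp_neg_mul_mul_sin_of_odd (a : ℝ) {k : ℤ} (hk : Odd k) :
    ∫ θ in (0 : ℝ)..π, exp (-(a * θ)) * sin (k * θ) =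
      k * (1 + exp (-(a * π))) / (a ^ 2 + k ^ 2) := by
  have hk0 : (k : ℝ) ≠ 0 := Int.cast_ne_zero.mpr (by rintro rfl; simp at hk)
  rw [intervalIntegral.integral_eq_sub_of_hasDerivAt
    (fun x _ => hasDerivAt_exp_neg_mul_mul_sin_primitive (by positivity) x)
    (by apply Continuous.intervalIntegrable; fun_prop)]
  rw [sin_int_mul_pi, cos_int_mul_pi, hk.neg_one_zpow]
  simp only [mul_zero, neg_zero, exp_zero, sin_zero, cos_zero]
  ring

theorem integral_exp_neg_mul_mul_cos_pow_mul_sin (a : ℝ) (p : ℕ) :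
    ∫ θ in (0 : ℝ)..π, exp (-(a * θ)) * cos θ ^ (2 * p) * sin θ =
      (1 + exp (-(a * π))) / ((2 * p + 1) * 2 ^ (2 * p + 1)) *
        ∑ j ∈ range (2 * p + 2), ((2 * p + 1).choose j : ℝ) *
          ((2 * p + 1 - 2 * j) ^ 2 / (a ^ 2 + (2 * p + 1 - 2 * j) ^ 2)) := by
  have hodd (j : ℕ) : ∫ θ in (0 : ℝ)..π, exp (-(a * θ)) * sin ((2 * p + 1 - 2 * j : ℝ) * θ) =
      (2 * p + 1 - 2 * j) * (1 + exp (-(a * π))) / (a ^ 2 + (2 * p + 1 - 2 * j) ^ 2) := by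
    have hc : (2 * p + 1 - 2 * j : ℝ) = ((2 * ((p : ℤ) - j) + 1 : ℤ) : ℝ) := by push_cast; ring
    rw [hc, integral_exp_neg_mul_mul_sin_of_odd a (odd_two_mul_add_one _)]
  have h := integral_mul_cos_pow_mul_sin (f := fun θ => exp (-(a * θ))) (by fun_prop) (2 * p) 0 π
  push_cast at h
  simp_rw [h, hodd, mul_sum, sum_div]
  exact sum_congr rfl fun j _ => by ring

theorem sum_range_choose_mul_of_even {g : ℝ → ℝ} (hg : Function.Even g) (p : ℕ) :
    ∑ j ∈ range (2 * p + 2), ((2 * p + 1).choose j : ℝ) * g (2 * p + 1 - 2 * j) =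
      2 * ∑ k ∈ range (p + 1), ((2 * p + 1).choose (p - k) : ℝ) * g (2 * k + 1) := by
  rw [show 2 * p + 2 = (p + 1) + (p + 1) by ring, sum_range_add,
    ← sum_range_reflect (fun j => ((2 * p + 1).choose j : ℝ) * g (2 * p + 1 - 2 * j)) (p + 1)]
  refine (congrArg₂ (· + ·) (sum_congr rfl fun k hk => ?_) (sum_congr rfl fun k hk => ?_)).trans
    (two_mul _).symm <;> have hkp : k ≤ p := Nat.lt_succ_iff.mp (mem_range.mp hk)
  · rw [Nat.add_sub_cancel]
    push_cast [hkp]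
    ring_nf
  · rw [← Nat.choose_symm (by omega : p - k ≤ 2 * p + 1), ← hg]
    congr 3
    · omega
    · push_cast; ring

/-- for `α > 0` and even `m ≥ 0`,
`∫₀^π e^(-θ/α) (cos θ)^m sin θ dθ
  = ((1 + e^(-π/α))/((m+1) 2^m)) [2^m - Σ_{k=0}^{m/2} binom(m+1,(m-2k)/2)/((2k+1)²α²+1)]`. -/
theorem exp_integral_even
    (α : ℝ) (hα : 0 < α) (m : ℕ) (hm : Even m) :
    ∫ θ in (0 : ℝ)..π, Real.exp (-θ / α) * (Real.cos θ) ^ m * Real.sin θ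
      = (1 + Real.exp (-π / α)) / (((m : ℝ) + 1) * 2 ^ m) *
          ((2 : ℝ) ^ m -
            ∑ k ∈ Finset.range (m / 2 + 1),
              ((m + 1).choose ((m - 2 * k) / 2) : ℝ) /
                ((2 * (k : ℝ) + 1) ^ 2 * α ^ 2 + 1)) := by
  obtain ⟨p, rfl⟩ := hm
  rw [← two_mul]
  set g : ℝ → ℝ := fun t => (t ^ 2 * α ^ 2 + 1)⁻¹
  have hg : Function.Even g := fun t => by simp only [g, even_two.neg_pow]
  have hfrac (c : ℝ) : c ^ 2 / (α⁻¹ ^ 2 + c ^ 2) = 1 - g c := by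
    simp only [g]
    field_simp
    ring
  have hchoose : ∑ j ∈ range (2 * p + 2), ((2 * p + 1).choose j : ℝ) = 2 ^ (2 * p + 1) := by
    exact_mod_cast Nat.sum_range_choose (2 * p + 1)
  have hhalf : ∑ k ∈ range (2 * p / 2 + 1),
      ((2 * p + 1).choose ((2 * p - 2 * k) / 2) : ℝ) / ((2 * (k : ℝ) + 1) ^ 2 * α ^ 2 + 1) =
      ∑ k ∈ range (p + 1), ((2 * p + 1).choose (p - k) : ℝ) * g (2 * k + 1) := by
    rw [Nat.mul_div_cancel_left p two_pos]
    exact sum_congr rfl fun k _ => by rw [show (2 * p - 2 * k) / 2 = p - k by omega]; rfl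
  simp_rw [show ∀ x : ℝ, -x / α = -(α⁻¹ * x) from fun x => by ring,
    integral_exp_neg_mul_mul_cos_pow_mul_sin, hfrac, mul_sub, mul_one, sum_sub_distrib, hchoose,
    sum_range_choose_mul_of_even hg p, hhalf]
  push_cast
  field_simp
  ring
end

section
/- Let α > 0 and let m ≥ 1 be an odd integer. Then ∫₀^π e^{−θ/α} (cos θ)^m sin θ dθ = ((1 − e^{−π/α})/((m+1) 2^m)) · [ 2^m − (1/2) binom(m+1, (m+1)/2) − Σ_{k=1}^{(m+1)/2} binom(m+1, (m−2k+1)/2) / (4k² α² + 1) ]. -/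
/-!
Integrating by parts against `cos θ ^ (m + 1) / (m + 1)` reduces the integral to
`∫₀^π e^{-θ/α} cos^{m+1} θ`, the boundary term being `(1 - e^{-π/α}) / (m + 1)` because `m + 1 = 2q`
is even. Expanding `(2 cos θ)^{2q} = (e^{iθ} + e^{-iθ})^{2q}` binomially and pairing the terms `j` and
`2q - j` gives `(2 cos θ)^{2q} = binom(2q, q) + 2 Σ_{k=1}^q binom(2q, q - k) cos 2kθ`, and
`∫₀^π e^{-θ/α} cos 2kθ dθ = α (1 - e^{-π/α}) / (4k²α² + 1)` by an explicit primitive.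
-/

open Real Finset

theorem two_mul_cos_pow (n : ℕ) (θ : ℝ) :
    (2 * cos θ) ^ n = ∑ j ∈ range (n + 1), (n.choose j : ℝ) * cos ((2 * j - n) * θ) := by
  have h : ((2 * cos θ : ℝ) : ℂ) ^ n =
      ∑ j ∈ range (n + 1), ((n.choose j : ℝ) : ℂ) * Complex.exp (((2 * j - n) * θ : ℝ) * Complex.I) := by
    push_cast
    rw [Complex.two_cos, add_pow]
    refine sum_congr rfl fun j hj => ?_
    rw [← Complex.exp_nat_mul, ← Complex.exp_nat_mul, ← Complex.exp_add,
      Nat.cast_sub (mem_range_succ_iff.mp hj)]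
    ring_nf
  simpa only [← Complex.ofReal_pow, Complex.ofReal_re, Complex.re_sum, Complex.re_ofReal_mul,
    Complex.exp_ofReal_mul_I_re] using congrArg Complex.re h

theorem sum_range_two_mul_add_one {M : Type*} [AddCommMonoid M] (g : ℕ → M) (q : ℕ) :
    ∑ j ∈ range (2 * q + 1), g j = g q + ∑ k ∈ Icc 1 q, (g (q - k) + g (q + k)) := by
  rw [show 2 * q + 1 = q + (q + 1) by ring, sum_range_add, sum_range_succ', ← sum_range_reflect,
    ← Ico_add_one_right_eq_Icc, sum_Ico_eq_sum_range, sum_add_distrib]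
  simp only [add_tsub_cancel_right, add_zero]
  rw [sum_congr rfl fun k _ => show g (q - 1 - k) = g (q - (1 + k)) by congr 1; omega]
  simp only [add_comm 1]
  abel

theorem sum_choose_mul_of_even {f : ℝ → ℝ} (hf : Function.Even f) (q : ℕ) :
    ∑ j ∈ range (2 * q + 1), ((2 * q).choose j : ℝ) * f (j - q) =
      (2 * q).choose q * f 0 + 2 * ∑ k ∈ Icc 1 q, ((2 * q).choose (q - k) : ℝ) * f k := by
  rw [sum_range_two_mul_add_one, sub_self, mul_sum]
  congr 1
  refine sum_congr rfl fun k hk => ?_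
  have hkq : k ≤ q := (mem_Icc.mp hk).2
  rw [Nat.cast_sub hkq, Nat.cast_add, sub_sub_cancel_left, hf, add_sub_cancel_left,
    Nat.choose_symm_of_eq_add (show 2 * q = q + k + (q - k) by omega)]
  ring

theorem two_mul_cos_pow_two_mul (q : ℕ) (θ : ℝ) :
    (2 * cos θ) ^ (2 * q) =
      (2 * q).choose q + 2 * ∑ k ∈ Icc 1 q, ((2 * q).choose (q - k) : ℝ) * cos (2 * k * θ) := by
  have heven : Function.Even fun x : ℝ => cos (2 * x * θ) := fun x => by
    simp only [mul_neg, neg_mul, cos_neg]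
  have hfold := sum_choose_mul_of_even heven q
  simp only [mul_zero, zero_mul, cos_zero, mul_one] at hfold
  rw [← hfold, two_mul_cos_pow]
  refine sum_congr rfl fun j _ => ?_
  push_cast
  ring_nf

theorem hasDerivAt_exp_neg_div (α θ : ℝ) :
    HasDerivAt (fun t => exp (-t / α)) (-(exp (-θ / α) / α)) θ := by
  simpa [neg_div, div_eq_mul_inv] using ((hasDerivAt_neg θ).div_const α).exp

section
variable {α : ℝ}

theorem hasDerivAt_exp_neg_div_mul_cos_primitive (hα : α ≠ 0) (b θ : ℝ) :
    HasDerivAt (fun t => α * exp (-t / α) * (b * α * sin (b * t) - cos (b * t)) / (b ^ 2 * α ^ 2 + 1))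
      (exp (-θ / α) * cos (b * θ)) θ := by
  have hb : HasDerivAt (fun t => b * t) b θ := by simpa using (hasDerivAt_id θ).const_mul b
  refine ((((hasDerivAt_exp_neg_div α θ).const_mul α).fun_mul
    ((hb.sin.const_mul (b * α)).fun_sub hb.cos)).div_const _).congr_deriv ?_
  field_simp
  ring

theorem integral_exp_neg_div_mul_cos_two_mul_natCast (hα : α ≠ 0) (k : ℕ) :
    ∫ θ in 0..π, exp (-θ / α) * cos (2 * k * θ) = α * (1 - exp (-π / α)) / (4 * k ^ 2 * α ^ 2 + 1) := by
  rw [intervalIntegral.integral_eq_sub_of_hasDerivAt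
    (fun θ _ => hasDerivAt_exp_neg_div_mul_cos_primitive hα (2 * k) θ)
    (by apply Continuous.intervalIntegrable; fun_prop)]
  have hsin : sin (2 * k * π) = 0 := by simpa [mul_assoc] using sin_nat_mul_pi (2 * k)
  have hcos : cos (2 * k * π) = 1 := by rw [← cos_nat_mul_two_pi k]; ring_nf
  simp only [hsin, hcos, mul_zero, sin_zero, cos_zero, neg_zero, zero_div, exp_zero]
  ring

theorem integral_exp_neg_div_mul_cos_pow_mul_sin (hα : α ≠ 0) (m : ℕ) (u v : ℝ) :
    ∫ θ in u..v, exp (-θ / α) * cos θ ^ m * sin θ =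
      (exp (-u / α) * cos u ^ (m + 1) - exp (-v / α) * cos v ^ (m + 1)) / (m + 1) -
        (α * (m + 1))⁻¹ * ∫ θ in u..v, exp (-θ / α) * cos θ ^ (m + 1) := by
  have hderiv : ∀ θ ∈ Set.uIcc u v, HasDerivAt (fun t => -(exp (-t / α) * cos t ^ (m + 1)) / (m + 1))
      (exp (-θ / α) * cos θ ^ m * sin θ + (α * (m + 1))⁻¹ * (exp (-θ / α) * cos θ ^ (m + 1))) θ :=
    fun θ _ => by
      refine (((hasDerivAt_exp_neg_div α θ).fun_mul ((hasDerivAt_cos θ).fun_pow (m + 1))).neg.div_const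
        _).congr_deriv ?_
      push_cast
      field_simp
      ring
  have hFTC := intervalIntegral.integral_eq_sub_of_hasDerivAt hderiv
    (by apply Continuous.intervalIntegrable; fun_prop)
  rw [intervalIntegral.integral_add (by apply Continuous.intervalIntegrable; fun_prop)
    (by apply Continuous.intervalIntegrable; fun_prop), intervalIntegral.integral_const_mul] at hFTC
  linear_combination hFTC

theorem integral_exp_neg_div_mul_cos_pow_two_mul (hα : α ≠ 0) (q : ℕ) :
    ∫ θ in 0..π, exp (-θ / α) * cos θ ^ (2 * q) =
      α * (1 - exp (-π / α)) / 2 ^ (2 * q) *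
        ((2 * q).choose q + 2 * ∑ k ∈ Icc 1 q, ((2 * q).choose (q - k) : ℝ) / (4 * k ^ 2 * α ^ 2 + 1)) := by
  -- the constant term is the `k = 0` cosine, so that one integral formula covers every term
  have hpointwise : ∀ θ, exp (-θ / α) * cos θ ^ (2 * q) = (2 ^ (2 * q))⁻¹ *
      ((2 * q).choose q * (exp (-θ / α) * cos (2 * (0 : ℕ) * θ)) +
        2 * ∑ k ∈ Icc 1 q, ((2 * q).choose (q - k) : ℝ) * (exp (-θ / α) * cos (2 * k * θ))) := by
    intro θ
    have h := two_mul_cos_pow_two_mul q θ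
    simp only [mul_left_comm _ (exp _), ← mul_sum, Nat.cast_zero, mul_zero, zero_mul, cos_zero,
      mul_one]
    rw [mul_pow] at h
    rw [inv_mul_eq_div, eq_div_iff (by positivity)]
    linear_combination exp (-θ / α) * h
  simp_rw [hpointwise]
  rw [intervalIntegral.integral_const_mul, intervalIntegral.integral_add
    (by apply Continuous.intervalIntegrable; fun_prop)
    (by apply Continuous.intervalIntegrable; fun_prop), intervalIntegral.integral_const_mul,
    intervalIntegral.integral_const_mul, intervalIntegral.integral_finsetSum
    (fun k _ => by apply Continuous.intervalIntegrable; fun_prop)]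
  simp only [intervalIntegral.integral_const_mul, integral_exp_neg_div_mul_cos_two_mul_natCast hα]
  simp only [mul_div_left_comm _ (α * _), ← mul_sum, Nat.cast_zero]
  ring
end

/-- for `α > 0` and odd `m ≥ 1`,
`∫₀^π e^(-θ/α) (cos θ)^m sin θ dθ
  = ((1 - e^(-π/α))/((m+1) 2^m)) [2^m - (1/2) binom(m+1,(m+1)/2)
      - Σ_{k=1}^{(m+1)/2} binom(m+1,(m-2k+1)/2)/(4k²α²+1)]`. -/
theorem exp_integral_odd
    (α : ℝ) (hα : 0 < α) (m : ℕ) (hm : Odd m) :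
    ∫ θ in (0 : ℝ)..π, Real.exp (-θ / α) * (Real.cos θ) ^ m * Real.sin θ
      = (1 - Real.exp (-π / α)) / (((m : ℝ) + 1) * 2 ^ m) *
          ((2 : ℝ) ^ m - (1 / 2) * ((m + 1).choose ((m + 1) / 2) : ℝ) -
            ∑ k ∈ Finset.Icc 1 ((m + 1) / 2),
              ((m + 1).choose ((m + 1 - 2 * k) / 2) : ℝ) /
                (4 * (k : ℝ) ^ 2 * α ^ 2 + 1)) := by
  obtain ⟨q, hq⟩ : ∃ q, m + 1 = 2 * q := by
    obtain ⟨t, rfl⟩ := hm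
    exact ⟨t + 1, by ring⟩
  have hm1 : (m : ℝ) + 1 = 2 * q := by exact_mod_cast hq
  have hpow : (2 : ℝ) ^ (2 * q) = 2 * 2 ^ m := by rw [← hq, pow_succ, mul_comm]
  have hhalf : (m + 1) / 2 = q := by omega
  have hsum : ∑ k ∈ Icc 1 ((m + 1) / 2), ((m + 1).choose ((m + 1 - 2 * k) / 2) : ℝ) /
      (4 * (k : ℝ) ^ 2 * α ^ 2 + 1) =
        ∑ k ∈ Icc 1 q, ((2 * q).choose (q - k) : ℝ) / (4 * k ^ 2 * α ^ 2 + 1) := by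
    rw [hhalf, hq]
    exact sum_congr rfl fun k _ => by rw [show (2 * q - 2 * k) / 2 = q - k by omega]
  rw [integral_exp_neg_div_mul_cos_pow_mul_sin hα.ne', hsum, hhalf, hq,
    integral_exp_neg_div_mul_cos_pow_two_mul hα.ne', hm1, hpow]
  simp only [cos_pi, cos_zero, (even_two_mul q).neg_one_pow, one_pow, neg_zero, zero_div, exp_zero,
    mul_one]
  field_simp
  ring
end

section
/- Let α ∈ (0, π] and let m ≥ 0 be an even integer. Then ∫₀^α (1 − θ/α)² (cos θ)^m sin θ dθ = 1/(m+1) + (2^{1−m}/((m+1) α²)) Σ_{k=0}^{m/2} binom(m+1, k) (cos((m−2k+1)α) − 1)/(m−2k+1)². -/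
/-!
Integrating by parts against `d(-cos^(m+1) θ / (m+1))` reduces the integral to
`1/(m+1) - 2/((m+1)α) ∫₀^α (1 - θ/α) cos^(m+1) θ dθ`. For `m + 1` odd the power-reduction
formula writes `2^m cos^(m+1) θ` as `Σ_{k ≤ m/2} binom(m+1,k) cos((m-2k+1)θ)` with all
frequencies odd, hence nonzero, and each
`∫₀^α (1 - θ/α) cos(cθ) dθ = (1 - cos(cα))/(c²α)` is elementary.
-/

open Real Finset

theorem two_pow_mul_cos_pow (n : ℕ) (x : ℝ) :
    2 ^ n * cos x ^ n =
      ∑ k ∈ range (n + 1), (n.choose k : ℝ) * cos (((n : ℝ) - 2 * k) * x) := by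
  have hexp : ((2 * cos x : ℝ) : ℂ) ^ n =
      ∑ k ∈ range (n + 1),
        ((n.choose k : ℝ) : ℂ) * Complex.exp (((2 * k - n : ℝ) * x : ℝ) * Complex.I) := by
    rw [Complex.ofReal_mul, Complex.ofReal_ofNat, Complex.ofReal_cos, Complex.two_cos, add_pow]
    refine sum_congr rfl fun k hk => ?_
    rw [← Complex.exp_nat_mul, ← Complex.exp_nat_mul, ← Complex.exp_add, mul_comm]
    push_cast [Nat.cast_sub (mem_range_succ_iff.mp hk)]
    ring_nf
  rw [← mul_pow, ← Complex.ofReal_re ((2 * cos x) ^ n), Complex.ofReal_pow, hexp,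
    Complex.re_sum]
  refine sum_congr rfl fun k _ => ?_
  rw [Complex.re_ofReal_mul, Complex.exp_ofReal_mul_I_re, ← cos_neg]
  ring_nf

theorem Finset.sum_range_two_mul_add_two_of_symm {M : Type*} [AddCommMonoid M] (t : ℕ)
    (f : ℕ → M) (hf : ∀ k ≤ 2 * t + 1, f (2 * t + 1 - k) = f k) :
    ∑ k ∈ range (2 * t + 2), f k = 2 • ∑ k ∈ range (t + 1), f k := by
  rw [show 2 * t + 2 = (t + 1) + (t + 1) by ring, sum_range_add, two_smul,
    ← sum_range_reflect (fun k => f (t + 1 + k))]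
  congr 1
  refine sum_congr rfl fun k hk => ?_
  have hk : k ≤ t := mem_range_succ_iff.mp hk
  rw [show t + 1 + (t + 1 - 1 - k) = 2 * t + 1 - k by omega, hf k (by omega)]

theorem two_pow_mul_cos_pow_succ_of_even {m : ℕ} (hm : Even m) (x : ℝ) :
    2 ^ m * cos x ^ (m + 1) = ∑ k ∈ range (m / 2 + 1),
      ((m + 1).choose k : ℝ) * cos (((m : ℝ) - 2 * k + 1) * x) := by
  obtain ⟨t, rfl⟩ := hm
  have hfold := two_pow_mul_cos_pow (t + t + 1) x
  rw [show t + t + 1 + 1 = 2 * t + 2 by ring, sum_range_two_mul_add_two_of_symm t _ fun k hk => by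
    rw [show 2 * t + 1 = t + t + 1 by ring, Nat.choose_symm (by omega), ← cos_neg,
      Nat.cast_sub (by omega)]
    ring_nf] at hfold
  rw [show (t + t) / 2 = t by omega]
  apply mul_left_cancel₀ (two_ne_zero (α := ℝ))
  rw [← mul_assoc, ← pow_succ', hfold, two_nsmul, two_mul]
  refine congrArg₂ _ ?_ ?_ <;> refine sum_congr rfl fun k _ => ?_ <;> push_cast <;> ring_nf

theorem integral_one_sub_div_mul_cos_mul {α c : ℝ} (hα : α ≠ 0) (hc : c ≠ 0) :
    ∫ θ in (0 : ℝ)..α, (1 - θ / α) * cos (c * θ) = (1 - cos (c * α)) / (c ^ 2 * α) := by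
  have hF : ∀ θ ∈ Set.uIcc 0 α, HasDerivAt
      (fun θ => (1 - θ / α) * sin (c * θ) / c - cos (c * θ) / (c ^ 2 * α))
      ((1 - θ / α) * cos (c * θ)) θ := by
    intro θ _
    have hlin : HasDerivAt (fun θ : ℝ => c * θ) c θ := by
      simpa using (hasDerivAt_id θ).const_mul c
    have h := (((((hasDerivAt_id θ).div_const α).const_sub 1).mul
      ((hasDerivAt_sin _).comp θ hlin)).div_const c).sub
      (((hasDerivAt_cos _).comp θ hlin).div_const (c ^ 2 * α))
    refine h.congr_deriv ?_
    simp only [Function.comp_apply, id]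
    field_simp
    ring
  rw [intervalIntegral.integral_eq_sub_of_hasDerivAt hF
    (Continuous.intervalIntegrable (by fun_prop) _ _)]
  field_simp
  simp only [sub_self, mul_zero, zero_mul, zero_sub, sub_zero, sin_zero, cos_zero, sub_neg_eq_add]
  ring

theorem integral_sq_one_sub_div_mul_cos_pow_mul_sin {α : ℝ} (hα : α ≠ 0) (m : ℕ) :
    ∫ θ in (0 : ℝ)..α, (1 - θ / α) ^ 2 * cos θ ^ m * sin θ =
      1 / (m + 1) -
        2 / ((m + 1) * α) * ∫ θ in (0 : ℝ)..α, (1 - θ / α) * cos θ ^ (m + 1) := by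
  have hu : ∀ θ ∈ Set.uIcc 0 α, HasDerivAt (fun θ => (1 - θ / α) ^ 2)
      (-(2 / α) * (1 - θ / α)) θ := by
    intro θ _
    refine ((((hasDerivAt_id θ).div_const α).const_sub 1).pow 2).congr_deriv ?_
    simp only [id]
    ring
  have hv : ∀ θ ∈ Set.uIcc 0 α, HasDerivAt (fun θ => -cos θ ^ (m + 1) / (m + 1))
      (cos θ ^ m * sin θ) θ := by
    intro θ _
    refine ((((hasDerivAt_cos θ).pow (m + 1)).neg).div_const ((m : ℝ) + 1)).congr_deriv ?_
    push_cast
    field_simp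
  simp_rw [mul_assoc _ (cos _ ^ m)]
  rw [intervalIntegral.integral_mul_deriv_eq_deriv_mul hu hv
    (Continuous.intervalIntegrable (by fun_prop) _ _)
    (Continuous.intervalIntegrable (by fun_prop) _ _)]
  have hIBP : ∫ θ in (0 : ℝ)..α, -(2 / α) * (1 - θ / α) * (-cos θ ^ (m + 1) / (m + 1)) =
      2 / ((m + 1) * α) * ∫ θ in (0 : ℝ)..α, (1 - θ / α) * cos θ ^ (m + 1) := by
    rw [← intervalIntegral.integral_const_mul]
    congr 1 with θ
    field_simp
  rw [hIBP, div_self hα]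
  simp [neg_div]

theorem cast_sub_two_mul_add_one_ne_zero {m : ℕ} (hm : Even m) (k : ℕ) :
    (m : ℝ) - 2 * k + 1 ≠ 0 := by
  obtain ⟨t, rfl⟩ := hm
  intro h
  have : ((t + t + 1 : ℕ) : ℝ) = (2 * k : ℕ) := by push_cast at h ⊢; linarith
  have := Nat.cast_injective this
  omega

/-- for `α ∈ (0, π]` and even `m ≥ 0`,
`∫₀^α (1 - θ/α)² (cos θ)^m sin θ dθ
  = 1/(m+1) + (2^(1-m)/((m+1)α²)) Σ_{k=0}^{m/2} binom(m+1,k)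
      (cos((m-2k+1)α) - 1)/(m-2k+1)²`. -/
theorem askey_integral_even
    (α : ℝ) (hα : α ∈ Set.Ioc 0 π) (m : ℕ) (hm : Even m) :
    ∫ θ in (0 : ℝ)..α, (1 - θ / α) ^ 2 * (Real.cos θ) ^ m * Real.sin θ
      = 1 / ((m : ℝ) + 1) +
        (2 : ℝ) ^ (1 - (m : ℤ)) / (((m : ℝ) + 1) * α ^ 2) *
          ∑ k ∈ Finset.range (m / 2 + 1),
            ((m + 1).choose k : ℝ) *
              (Real.cos (((m : ℝ) - 2 * (k : ℝ) + 1) * α) - 1) /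
                ((m : ℝ) - 2 * (k : ℝ) + 1) ^ 2 := by
  have hα0 : α ≠ 0 := hα.1.ne'
  have hreduce : ∀ θ, (1 - θ / α) * cos θ ^ (m + 1) = ((2 : ℝ) ^ m)⁻¹ *
      ∑ k ∈ range (m / 2 + 1), ((m + 1).choose k : ℝ) *
        ((1 - θ / α) * cos (((m : ℝ) - 2 * k + 1) * θ)) := by
    intro θ
    simp_rw [mul_left_comm _ (1 - θ / α), ← mul_sum, ← two_pow_mul_cos_pow_succ_of_even hm]
    field_simp
  simp_rw [integral_sq_one_sub_div_mul_cos_pow_mul_sin hα0, hreduce,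
    intervalIntegral.integral_const_mul]
  rw [intervalIntegral.integral_finsetSum fun k _ =>
    Continuous.intervalIntegrable (by fun_prop) _ _]
  simp_rw [intervalIntegral.integral_const_mul,
    integral_one_sub_div_mul_cos_mul hα0 (cast_sub_two_mul_add_one_ne_zero hm _)]
  rw [zpow_sub₀ two_ne_zero, zpow_one, zpow_natCast, sub_eq_add_neg, mul_sum, mul_sum, mul_sum,
    ← sum_neg_distrib]
  congr 1
  refine sum_congr rfl fun k _ => ?_
  have := cast_sub_two_mul_add_one_ne_zero hm k
  field_simp
  ring
end
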